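/- arXiv:1605.07447 — 2 statements merged into one kernel-verified Lean document; each statement's English description precedes it below -/
import Mathlib

section
/- Let $A$ be a commutative ring, $\mathfrak{a} \subseteq A$ a finitely generated ideal, and $M$ an $A$-module. Then the $\mathfrak{a}$-adic completion functor is idempotent on $M$ in the following sense: the natural map $\Lambda_{\mathfrak{a}}(\tau_M) : \Lambda_{\mathfrak{a}}(M) \to \Lambda_{\mathfrak{a}}(\Lambda_{\mathfrak{a}}(M))$, induced by the completion map $\tau_M : M \to \Lambda_{\mathfrak{a}}(M)$, is an isomorphism. -/
namespace AdicCompletion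

variable {R : Type*} [CommRing R] {I : Ideal R} {M : Type*} [AddCommGroup M] [Module R M]

/- Since `I` is finitely generated, `I ^ n • ⊤` is the kernel of the `n`-th projection of the
completion (Stacks 05GG), so an element and the image of a lift of its `n`-th component agree
modulo `I ^ n`. -/
theorem map_of_eq_of (hI : I.FG) : ⇑(map I (of I M)) = of I (AdicCompletion I M) := by
  funext x
  refine ext fun n ↦ ?_
  obtain ⟨m, hm⟩ := Submodule.Quotient.mk_surjective _ (x.val n)
  rw [map_val_apply, ← hm, LinearMap.reduceModIdeal_apply, of_apply, Submodule.mkQ_apply,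
    Submodule.Quotient.eq, pow_smul_top_eq_ker_eval hI, LinearMap.mem_ker, map_sub, eval_of,
    eval_apply, Submodule.mkQ_apply, hm, sub_self]

end AdicCompletion

/-- For a finitely generated ideal `𝔞` of a commutative ring `A` and any `A`-module `M`,
adic completion is idempotent: the map `Λ_𝔞(τ_M) : Λ_𝔞(M) → Λ_𝔞(Λ_𝔞(M))` induced by the
completion map `τ_M : M → Λ_𝔞(M)` is an isomorphism. -/
theorem adicCompletion_idempotent {A : Type*} [CommRing A] (𝔞 : Ideal A) (h𝔞 : 𝔞.FG)
    (M : Type*) [AddCommGroup M] [Module A M] :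
    Function.Bijective (AdicCompletion.map 𝔞 (AdicCompletion.of 𝔞 M)) := by
  rw [AdicCompletion.map_of_eq_of h𝔞, AdicCompletion.of_bijective_iff]
  exact AdicCompletion.isAdicComplete h𝔞
end

section
/- Let $A$ be a commutative noetherian ring, $\mathfrak{a} \subseteq A$ an ideal, and $I$ an injective $A$-module. Then the $\mathfrak{a}$-torsion submodule $\Gamma_{\mathfrak{a}}(I) = \{x \in I : \mathfrak{a}^n x = 0 \text{ for some } n\}$ is again an injective $A$-module. -/
/-!
By Baer's criterion. Let `φ : W → Γ_𝔞(I)` be defined on an ideal `W`. Its image is finitely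
generated, hence killed by some `𝔞 ^ n`; by Artin–Rees, `𝔞 ^ m ⊓ W ≤ 𝔞 ^ n * W` for some `m`, so
`φ` vanishes on `𝔞 ^ m ⊓ W` and extends by zero to `W ⊔ 𝔞 ^ m`. Baer's criterion for `I` extends
this to a map `A → I`, which kills `𝔞 ^ m` and so lands in `Γ_𝔞(I)`.

`Module.Injective A I` only tests modules in the universe of `I`, which gives Baer's criterion only
when `A` is small. So for each test pair `X ↪ Y` the argument is run over the ring
`A ⧸ ann (Y × I)`, which embeds in `AddMonoid.End (Y × I)`.
-/

universe v

/-- The `𝔞`-torsion submodule `Γ_𝔞(M)`: elements annihilated by some power of `𝔞`. -/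
def torsionSubmodule {A : Type*} [CommRing A] (𝔞 : Ideal A) (M : Type*) [AddCommGroup M]
    [Module A M] : Submodule A M :=
  ⨆ n : ℕ, Submodule.torsionBySet A M ((𝔞 ^ n : Ideal A) : Set A)

theorem Ideal.exists_pow_inf_le_pow_mul {A : Type*} [CommRing A] [IsNoetherianRing A]
    (𝔞 W : Ideal A) (n : ℕ) : ∃ m : ℕ, 𝔞 ^ m ⊓ W ≤ 𝔞 ^ n * W := by
  obtain ⟨k, hk⟩ := Ideal.exists_pow_inf_eq_pow_smul 𝔞 (W : Submodule A A)
  refine ⟨n + k, ?_⟩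
  have h := hk (n + k) (Nat.le_add_left k n)
  simp only [smul_eq_mul, Ideal.mul_top, Nat.add_sub_cancel] at h
  rw [h]
  exact Ideal.mul_mono_right inf_le_right

section Torsion

variable {A : Type*} [CommRing A] {M : Type*} [AddCommGroup M] [Module A M]

theorem torsionBySet_pow_mono (𝔞 : Ideal A) :
    Monotone fun n : ℕ => Submodule.torsionBySet A M ((𝔞 ^ n : Ideal A) : Set A) :=
  fun _ _ h => Submodule.torsionBySet_le_torsionBySet_of_subset (Ideal.pow_le_pow_right h)

theorem Submodule.FG.exists_le_torsionBySet_pow {𝔞 : Ideal A} {N : Submodule A M} (hN : N.FG)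
    (h : N ≤ torsionSubmodule 𝔞 M) :
    ∃ n : ℕ, N ≤ Submodule.torsionBySet A M ((𝔞 ^ n : Ideal A) : Set A) := by
  obtain ⟨-, ⟨n, rfl⟩, hn⟩ :=
    (CompleteLattice.isCompactElement_iff_le_of_directed_sSup_le (α := Submodule A M) N).mp
      ((Submodule.fg_iff_compact N).mp hN) _ (Set.range_nonempty _)
      (torsionBySet_pow_mono 𝔞).directed_le.directedOn_range h
  exact ⟨n, hn⟩

theorem torsionSubmodule_restrictScalars {B : Type*} [CommRing B] [Algebra A B]
    (hAB : Function.Surjective (algebraMap A B)) [Module B M] [IsScalarTower A B M]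
    (𝔞 : Ideal A) :
    (torsionSubmodule (𝔞.map (algebraMap A B)) M).restrictScalars A = torsionSubmodule 𝔞 M := by
  simp only [torsionSubmodule, Submodule.restrictScalars_iSup, ← Ideal.map_pow]
  refine iSup_congr fun n => ?_
  ext x
  simp only [Submodule.restrictScalars_mem, Submodule.mem_torsionBySet_iff, Subtype.forall,
    SetLike.mem_coe, Ideal.mem_map_iff_of_surjective _ hAB]
  constructor
  · intro h a ha
    rw [← algebraMap_smul B]
    exact h _ ⟨a, ha, rfl⟩
  · rintro h - ⟨a, ha, rfl⟩
    rw [algebraMap_smul]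
    exact h a ha

theorem LinearMap.eq_zero_of_mem_mul {J W : Ideal A} (f : W →ₗ[A] M)
    (hf : LinearMap.range f ≤ Submodule.torsionBySet A M (J : Set A)) {x : A}
    (hx : x ∈ J * W) : f ⟨x, Ideal.mul_le_right hx⟩ = 0 := by
  induction hx using Submodule.mul_induction_on' with
  | mem_mul_mem a ha w hw =>
    rw [show f ⟨a * w, _⟩ = a • f ⟨w, hw⟩ from f.map_smul a ⟨w, hw⟩]
    exact (Submodule.mem_torsionBySet_iff _ _).mp (hf ⟨_, rfl⟩) ⟨a, ha⟩
  | add x hx y hy ihx ihy =>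
    rw [show (⟨x + y, _⟩ : W) = ⟨x, Ideal.mul_le_right hx⟩ + ⟨y, Ideal.mul_le_right hy⟩ from rfl,
      map_add, ihx, ihy, add_zero]

theorem Module.Baer.exists_extension_eq_zero_on (hM : Module.Baer A M) {W K : Ideal A}
    (f : W →ₗ[A] M) (hf : ∀ x : W, (x : A) ∈ K → f x = 0) :
    ∃ g : A →ₗ[A] M, (∀ x : W, g x = f x) ∧ ∀ y ∈ K, g y = 0 := by
  have agree : ∀ (x : W) (y : K), (x : A) = y → f x = (0 : K →ₗ[A] M) y := fun x y hxy =>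
    hf x (hxy ▸ y.2)
  let ψ := LinearPMap.sup ⟨W, f⟩ ⟨K, 0⟩ agree
  obtain ⟨g, hg⟩ := hM ψ.domain ψ.toFun
  refine ⟨g, fun x => ?_, fun y hy => ?_⟩
  · rw [hg x (Submodule.mem_sup_left x.2)]
    exact ((LinearPMap.left_le_sup _ _ agree).2 rfl).symm
  · rw [hg y (Submodule.mem_sup_right hy)]
    exact ((LinearPMap.right_le_sup _ _ agree).2 (x := ⟨y, hy⟩) rfl).symm

theorem Module.Baer.torsionSubmodule [IsNoetherianRing A] (𝔞 : Ideal A) (hM : Module.Baer A M) :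
    Module.Baer A (torsionSubmodule 𝔞 M) := by
  intro W φ
  let f := Submodule.subtype _ ∘ₗ φ
  obtain ⟨n, hn⟩ := (Submodule.fg_range f).exists_le_torsionBySet_pow (𝔞 := 𝔞)
    (by rintro - ⟨x, rfl⟩; exact (φ x).2)
  obtain ⟨m, hm⟩ := Ideal.exists_pow_inf_le_pow_mul 𝔞 W n
  obtain ⟨g, hgf, hg⟩ := hM.exists_extension_eq_zero_on f
    (fun x hx => f.eq_zero_of_mem_mul hn (hm ⟨hx, x.2⟩))
  have hg_tors (a : A) : g a ∈ Submodule.torsionBySet A M ((𝔞 ^ m : Ideal A) : Set A) := by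
    refine (Submodule.mem_torsionBySet_iff _ _).mpr fun ⟨b, hb⟩ => ?_
    rw [← map_smul, smul_eq_mul]
    exact hg _ (Ideal.mul_mem_right a _ hb)
  exact ⟨g.codRestrict _ fun a => Submodule.mem_iSup_of_mem m (hg_tors a),
    fun x hx => Subtype.ext (hgf ⟨x, hx⟩)⟩

end Torsion

section SurjectiveAlgebraMap

variable {A B : Type*} [CommRing A] [CommRing B] [Algebra A B]
  (hAB : Function.Surjective (algebraMap A B))
  {Q : Type v} [AddCommGroup Q] [Module A Q] [Module B Q] [IsScalarTower A B Q]
include hAB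

theorem Module.Injective.of_surjective_algebraMap [Module.Injective A Q] :
    Module.Injective B Q where
  out X Y _ _ _ _ f hf g := by
    let := Module.compHom X (algebraMap A B)
    let := Module.compHom Y (algebraMap A B)
    have : IsScalarTower A B X := .of_algebraMap_smul fun _ _ => rfl
    have : IsScalarTower A B Y := .of_algebraMap_smul fun _ _ => rfl
    obtain ⟨h, hh⟩ := Module.Injective.out (f.restrictScalars A) hf (g.restrictScalars A)
    exact ⟨h.extendScalarsOfSurjective hAB, hh⟩

theorem Module.Injective.exists_extension_of_surjective_algebraMap [Module.Injective B Q]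
    {X Y : Type v} [AddCommGroup X] [AddCommGroup Y] [Module A X] [Module A Y] [Module B X]
    [Module B Y] [IsScalarTower A B X] [IsScalarTower A B Y] (f : X →ₗ[A] Y)
    (hf : Function.Injective f) (g : X →ₗ[A] Q) :
    ∃ h : Y →ₗ[A] Q, ∀ x, h (f x) = g x := by
  obtain ⟨h, hh⟩ := Module.Injective.out (f.extendScalarsOfSurjective hAB) hf
    (g.extendScalarsOfSurjective hAB)
  exact ⟨h.restrictScalars A, hh⟩

end SurjectiveAlgebraMap

theorem small_quotient_annihilator (A : Type*) [CommRing A] (M : Type v) [AddCommGroup M]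
    [Module A M] : Small.{v} (A ⧸ Module.annihilator A M) :=
  small_of_injective (RingHom.kerLift_injective (Module.toAddMonoidEnd A M))

/-- Over a noetherian commutative ring, the `𝔞`-torsion submodule of an injective module is
again injective. -/
theorem torsion_injective_of_injective {A : Type*} [CommRing A] [IsNoetherianRing A]
    (𝔞 : Ideal A) (I : Type*) [AddCommGroup I] [Module A I]
    (hI : Module.Injective A I) :
    Module.Injective A (torsionSubmodule 𝔞 I) := by
  refine ⟨fun X Y _ _ _ _ f hf g => ?_⟩
  set c := Module.annihilator A (Y × I)
  have hYI : Module.IsTorsionBySet A (Y × I) c := Module.isTorsionBySet_annihilator A (Y × I)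
  have hY : Module.IsTorsionBySet A Y c := fun y a => congrArg Prod.fst (@hYI (y, 0) a)
  have hI' : Module.IsTorsionBySet A I c := fun i a => congrArg Prod.snd (@hYI (0, i) a)
  have hX : Module.IsTorsionBySet A X c := fun x a =>
    hf (by rw [map_smul, map_zero]; exact @hY (f x) a)
  let := hX.module; let := hY.module; let := hI'.module
  have : IsScalarTower A (A ⧸ c) X := .of_algebraMap_smul fun _ _ => rfl
  have : IsScalarTower A (A ⧸ c) Y := .of_algebraMap_smul fun _ _ => rfl
  have : IsScalarTower A (A ⧸ c) I := .of_algebraMap_smul fun _ _ => rfl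
  have := small_quotient_annihilator A (Y × I)
  have hq := Ideal.Quotient.mk_surjective (I := c)
  have hΓ : Module.Injective (A ⧸ c) (torsionSubmodule (𝔞.map (algebraMap A (A ⧸ c))) I) :=
    ((Module.Baer.of_injective (hI.of_surjective_algebraMap hq)).torsionSubmodule _).injective
  revert g
  rw [← torsionSubmodule_restrictScalars (M := I) hq]
  exact hΓ.exists_extension_of_surjective_algebraMap hq f hf
end
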